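/- Let G : ℝ^m → ℝ^p, m ≥ p > 0, be a continuously differentiable map with G(0)=0, and let ε>0. Suppose that every x with ‖x‖ = ε and G(x) = 0 satisfies x ∉ M(G) (i.e. the linear map v ↦ (DG(x)v, ⟨x,v⟩) is surjective at every point of S_ε ∩ G⁻¹(0)). Then there exists η>0 such that every x with ‖x‖ = ε and ‖G(x)‖ < η satisfies x ∉ M(G); consequently the restriction of G to S_ε ∩ G⁻¹(B_η) is a submersion. -/

import Mathlib

open Metric Set Function

noncomputable section

/-- The Milnor set of `G`: points where `v ↦ (DG(x) v, ⟨x, v⟩)` is not surjective. -/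
def milnorSet {m p : ℕ} (G : EuclideanSpace ℝ (Fin m) → EuclideanSpace ℝ (Fin p)) :
    Set (EuclideanSpace ℝ (Fin m)) :=
  {x | ¬ Function.Surjective
    (fun v : EuclideanSpace ℝ (Fin m) => (fderiv ℝ G x v, (inner ℝ x v : ℝ)))}

/-! Surjectivity is an open condition on linear maps into a finite-dimensional space, so the
Milnor set of a `C¹` map is closed and its trace on the sphere `S_ε` is compact. By hypothesis
`‖G‖` is positive on that compact set, hence bounded below there by some `η > 0`. -/

open Module in
theorem LinearMap.surjective_iff_finrank_le_rank {K V W : Type*} [DivisionRing K]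
    [AddCommGroup V] [Module K V] [AddCommGroup W] [Module K W] [FiniteDimensional K W]
    (f : V →ₗ[K] W) : Surjective f ↔ (finrank K W : Cardinal) ≤ f.rank := by
  rw [← LinearMap.range_eq_top, LinearMap.rank, ← Submodule.finrank_eq_rank, Nat.cast_le]
  exact ⟨fun h => by rw [h, finrank_top],
    fun h => Submodule.eq_top_of_finrank_eq ((Submodule.finrank_le _).antisymm h)⟩

open Module in
theorem ContinuousLinearMap.isOpen_setOf_surjective {𝕜 E F : Type*}
    [NontriviallyNormedField 𝕜] [CompleteSpace 𝕜] [NormedAddCommGroup E] [NormedSpace 𝕜 E]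
    [NormedAddCommGroup F] [NormedSpace 𝕜 F] [FiniteDimensional 𝕜 F] :
    IsOpen {f : E →L[𝕜] F | Surjective f} := by
  simpa only [← LinearMap.surjective_iff_finrank_le_rank, ContinuousLinearMap.coe_coe] using
    isOpen_setOfPred_nat_le_rank (𝕜 := 𝕜) (E := E) (F := F) (finrank 𝕜 F)

section Milnor

variable {m p : ℕ} {G : EuclideanSpace ℝ (Fin m) → EuclideanSpace ℝ (Fin p)}

theorem milnorSet_eq_preimage :
    milnorSet G = (fun x => (fderiv ℝ G x).prod (innerSL ℝ x)) ⁻¹' {L | Surjective L}ᶜ :=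
  rfl

theorem isClosed_milnorSet (hG : ContDiff ℝ 1 G) : IsClosed (milnorSet G) := by
  rw [milnorSet_eq_preimage]
  exact ContinuousLinearMap.isOpen_setOf_surjective.isClosed_compl.preimage <|
    (ContinuousLinearMap.prodₗᵢ ℝ).continuous.comp
      ((hG.continuous_fderiv one_ne_zero).prodMk (innerSL ℝ).continuous)

theorem isCompact_sphere_inter_milnorSet (hG : ContDiff ℝ 1 G) (ε : ℝ) :
    IsCompact (sphere 0 ε ∩ milnorSet G) :=
  (isCompact_sphere 0 ε).inter_right (isClosed_milnorSet hG)

end Milnor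

theorem sphere_transversality_is_open_general (m p : ℕ)
    (G : EuclideanSpace ℝ (Fin m) → EuclideanSpace ℝ (Fin p))
    (hG : ContDiff ℝ 1 G)
    (ε : ℝ)
    (hsphere : ∀ x : EuclideanSpace ℝ (Fin m), ‖x‖ = ε → G x = 0 → x ∉ milnorSet G) :
    ∃ η > (0 : ℝ), ∀ x : EuclideanSpace ℝ (Fin m),
      ‖x‖ = ε → ‖G x‖ < η → x ∉ milnorSet G := by
  have hpos : ∀ x ∈ sphere 0 ε ∩ milnorSet G, 0 < ‖G x‖ := fun x ⟨hx, hM⟩ =>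
    norm_pos_iff.2 fun h0 => hsphere x (mem_sphere_zero_iff_norm.1 hx) h0 hM
  obtain ⟨η, hη, hle⟩ := (isCompact_sphere_inter_milnorSet hG ε).exists_forall_le'
    (continuous_norm.comp hG.continuous).continuousOn hpos
  exact ⟨η, hη, fun x hx hGx hM => (hle x ⟨mem_sphere_zero_iff_norm.2 hx, hM⟩).not_gt hGx⟩

theorem sphere_transversality_is_open (m p : ℕ) (hmp : p ≤ m) (hp : 0 < p)
    (G : EuclideanSpace ℝ (Fin m) → EuclideanSpace ℝ (Fin p))
    (hG : ContDiff ℝ 1 G) (hG0 : G 0 = 0)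
    (ε : ℝ) (hε : 0 < ε)
    (hsphere : ∀ x : EuclideanSpace ℝ (Fin m), ‖x‖ = ε → G x = 0 → x ∉ milnorSet G) :
    ∃ η > (0 : ℝ), ∀ x : EuclideanSpace ℝ (Fin m),
      ‖x‖ = ε → ‖G x‖ < η → x ∉ milnorSet G :=
  sphere_transversality_is_open_general m p G hG ε hsphere
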